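/- Let A = λ − Var(S_n) + γ' and B = ((n-2)/n)(λ − Var(S_n)) + 2λ²/n. Then A ≤ B ≤ (3 − 2/n) A. -/

import Mathlib

open Finset Real

/-- Probability weight of an outcome `x` of the Bernoulli matrix `(X_{j,r})` with
success probabilities `p`, the entries being independent. -/
noncomputable def bw (n : ℕ) (p : Fin n → Fin n → ℝ) (x : Fin n → Fin n → Bool) : ℝ :=
  ∏ j : Fin n, ∏ r : Fin n, if x j r then p j r else 1 - p j r

/-- Expectation of `f (X, π)` where the Bernoulli matrix `X` (independent entries with
success probabilities `p`) and the uniformly distributed random permutation `π` are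
independent. -/
noncomputable def dExp (n : ℕ) (p : Fin n → Fin n → ℝ)
    (f : (Fin n → Fin n → Bool) → Equiv.Perm (Fin n) → ℝ) : ℝ :=
  ((n.factorial : ℝ))⁻¹ *
    ∑ σ : Equiv.Perm (Fin n), ∑ x : Fin n → Fin n → Bool, bw n p x * f x σ

/-- The random diagonal sum `S_n = ∑ j, X_{j,π(j)}` as a function of the outcome. -/
noncomputable def dSum (n : ℕ) (x : Fin n → Fin n → Bool) (σ : Equiv.Perm (Fin n)) : ℝ :=
  ∑ j : Fin n, if x j (σ j) then (1:ℝ) else 0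

/-- The variance of the random diagonal sum `S_n`. -/
noncomputable def dVar (n : ℕ) (p : Fin n → Fin n → ℝ) : ℝ :=
  dExp n p (fun x σ => (dSum n x σ)^2) - (dExp n p (dSum n))^2

/-!
Given `π`, the entries `X_{j,π(j)}` are independent, so `E S_n = λ` and
`E S_n² = λ + T / (n(n-1))` with `T = ∑_{j≠k, r≠s} p_{jr} p_{ks}`, because `(π j, π k)` is uniform
on the off-diagonal pairs. Hence `λ - Var S_n = λ² - T / (n(n-1))`, and with
`G = ∑_{j≠k, r≠s} (p_{jr} - p_{js})₊ (p_{ks} - p_{kr})₊` both inequalities are linear in `T` and `G`.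
The first one is `G ≤ T`, termwise as `p ≥ 0`. The second one follows from
`n² T ≤ (n-1)² (nλ)² + n G`: a quantitative Chebyshev inequality bounds the contribution of each pair
of rows by the product of their sums plus their discordant pairs, and Cauchy–Schwarz on the row sums
absorbs the diagonal terms.
-/

theorem mul_le_max_zero_mul_add (x y : ℝ) :
    x * y ≤ max 0 x * max 0 y + max 0 (-x) * max 0 (-y) := by
  rcases le_total 0 x with hx | hx <;> rcases le_total 0 y with hy | hy <;>
    simp [hx, hy] <;> nlinarith

section OffDiagonal

variable {ι : Type*} [Fintype ι]

theorem Finset.sum_sum_ite_ne_eq_sub [DecidableEq ι] {M : Type*} [AddCommGroup M]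
    (f : ι → ι → M) :
    ∑ r, ∑ s, (if r ≠ s then f r s else 0) = ∑ r, ∑ s, f r s - ∑ r, f r r := by
  rw [← Finset.sum_sub_distrib]
  refine Finset.sum_congr rfl fun r _ => ?_
  rw [← Finset.sum_filter, Finset.filter_ne, Finset.sum_erase_eq_sub (Finset.mem_univ r)]

theorem Finset.sum_sum_ite_ne_const [DecidableEq ι] {M : Type*} [AddCommMonoid M] (c : M) :
    ∑ j : ι, ∑ k : ι, (if j ≠ k then c else 0) = (Fintype.card ι * (Fintype.card ι - 1)) • c := by
  simp only [← Finset.sum_filter, Finset.filter_ne, Finset.sum_const,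
    Finset.card_erase_of_mem (Finset.mem_univ _), Finset.card_univ, smul_smul]

theorem Finset.sum_sum_ite_eq_add [DecidableEq ι] {M : Type*} [AddCommMonoid M] (a : ι → M)
    (b : ι → ι → M) :
    ∑ j, ∑ k, (if j = k then a j else b j k) = ∑ j, a j + ∑ j, ∑ k, (if j ≠ k then b j k else 0) := by
  rw [← Finset.sum_add_distrib]
  refine Finset.sum_congr rfl fun j _ => ?_
  have hsplit : ∀ k, (if j = k then a j else b j k)
      = (if j = k then a j else 0) + (if j ≠ k then b j k else 0) := fun k => by
    split_ifs <;> simp_all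
  simp only [hsplit, Finset.sum_add_distrib, Finset.sum_ite_eq, Finset.mem_univ, if_true]

/-- A quantitative Chebyshev sum inequality: the discordant pairs bound the defect. -/
theorem sum_mul_sum_le_card_mul_sum_mul_add (u v : ι → ℝ) :
    (∑ r, u r) * (∑ r, v r)
      ≤ Fintype.card ι * ∑ r, u r * v r + ∑ r, ∑ s, max 0 (u r - u s) * max 0 (v s - v r) := by
  have hdiag : ∑ r : ι, ∑ _s : ι, u r * v r = Fintype.card ι * ∑ r, u r * v r := by
    simp [Finset.mul_sum]
  have hD : ∑ r, ∑ s, (u r - u s) * (v s - v r)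
      = 2 * ((∑ r, u r) * (∑ r, v r) - Fintype.card ι * ∑ r, u r * v r) := by
    have hexpand : ∀ r s,
        (u r - u s) * (v s - v r) = u r * v s + u s * v r - u r * v r - u s * v s :=
      fun _ _ => by ring
    simp only [hexpand, Finset.sum_add_distrib, Finset.sum_sub_distrib]
    rw [Finset.sum_comm (f := fun r s => u s * v r), Finset.sum_comm (f := fun r s => u s * v s),
      hdiag, ← Finset.sum_mul_sum]
    ring
  have hpos : ∑ r, ∑ s, (u r - u s) * (v s - v r)
      ≤ 2 * ∑ r, ∑ s, max 0 (u r - u s) * max 0 (v s - v r) :=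
    calc ∑ r, ∑ s, (u r - u s) * (v s - v r)
        ≤ ∑ r, ∑ s, (max 0 (u r - u s) * max 0 (v s - v r)
            + max 0 (u s - u r) * max 0 (v r - v s)) := by
          gcongr with r _ s _
          simpa only [neg_sub] using mul_le_max_zero_mul_add (u r - u s) (v s - v r)
      _ = _ := by
          rw [two_mul]
          simp only [Finset.sum_add_distrib]
          rw [Finset.sum_comm (f := fun r s => max 0 (u s - u r) * max 0 (v r - v s))]
  linarith

variable [DecidableEq ι]

theorem card_mul_sum_ite_ne_mul_le (u v : ι → ℝ) :
    Fintype.card ι * ∑ r, ∑ s, (if r ≠ s then u r * v s else 0)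
      ≤ (Fintype.card ι - 1) * ((∑ r, u r) * (∑ r, v r))
        + ∑ r, ∑ s, (if r ≠ s then max 0 (u r - u s) * max 0 (v s - v r) else 0) := by
  simp only [Finset.sum_sum_ite_ne_eq_sub, sub_self, max_self, mul_zero, Finset.sum_const_zero,
    sub_zero, ← Finset.sum_mul_sum]
  linear_combination sum_mul_sum_le_card_mul_sum_mul_add u v

theorem sum_ite_ne_and_ne_eq {M : Type*} [AddCommMonoid M] (f : ι → ι → ι → ι → M) :
    ∑ j, ∑ k, ∑ r, ∑ s, (if j ≠ k ∧ r ≠ s then f j k r s else 0)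
      = ∑ j, ∑ k, if j ≠ k then ∑ r, ∑ s, (if r ≠ s then f j k r s else 0) else 0 := by
  simp only [ite_and, Finset.sum_ite_irrel, Finset.sum_const_zero]

theorem sq_card_mul_sum_ite_ne_and_ne_le (p : ι → ι → ℝ) :
    (Fintype.card ι : ℝ) ^ 2 * ∑ j, ∑ k, ∑ r, ∑ s,
        (if j ≠ k ∧ r ≠ s then p j r * p k s else 0)
      ≤ ((Fintype.card ι : ℝ) - 1) ^ 2 * (∑ j, ∑ r, p j r) ^ 2
        + Fintype.card ι * ∑ j, ∑ k, ∑ r, ∑ s,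
          (if j ≠ k ∧ r ≠ s then max 0 (p j r - p j s) * max 0 (p k s - p k r) else 0) := by
  rcases isEmpty_or_nonempty ι with hι | hι
  · simp
  set N : ℝ := (Fintype.card ι : ℝ)
  have hN : 1 ≤ N := Nat.one_le_cast.mpr Fintype.card_pos
  set R : ι → ℝ := fun j => ∑ r, p j r
  set G := ∑ j, ∑ k, ∑ r, ∑ s,
    (if j ≠ k ∧ r ≠ s then max 0 (p j r - p j s) * max 0 (p k s - p k r) else 0)
  have hrows : N * ∑ j, ∑ k, ∑ r, ∑ s, (if j ≠ k ∧ r ≠ s then p j r * p k s else 0)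
      ≤ (N - 1) * ((∑ j, R j) ^ 2 - ∑ j, R j ^ 2) + G := by
    have hRR : ∑ j, ∑ k, (if j ≠ k then R j * R k else 0) = (∑ j, R j) ^ 2 - ∑ j, R j ^ 2 := by
      simp only [Finset.sum_sum_ite_ne_eq_sub, ← Finset.sum_mul_sum, sq]
    rw [← hRR, sum_ite_ne_and_ne_eq]
    simp only [G, sum_ite_ne_and_ne_eq, Finset.mul_sum, ← Finset.sum_add_distrib]
    gcongr with j _ k _
    split_ifs
    · exact card_mul_sum_ite_ne_mul_le (p j) (p k)
    · simp
  have hCS : (∑ j, R j) ^ 2 ≤ N * ∑ j, R j ^ 2 := by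
    simpa using sq_sum_le_card_mul_sum_sq (s := Finset.univ) (f := R)
  linarith [mul_le_mul_of_nonneg_left hrows (by linarith : (0:ℝ) ≤ N),
    mul_nonneg (by linarith : (0:ℝ) ≤ N - 1) (sub_nonneg.2 hCS)]

theorem sum_ite_ne_and_ne_max_zero_nonneg (p : ι → ι → ℝ) :
    0 ≤ ∑ j, ∑ k, ∑ r, ∑ s,
      (if j ≠ k ∧ r ≠ s then max 0 (p j r - p j s) * max 0 (p k s - p k r) else 0) := by
  refine Finset.sum_nonneg fun j _ => Finset.sum_nonneg fun k _ =>
    Finset.sum_nonneg fun r _ => Finset.sum_nonneg fun s _ => ?_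
  split_ifs <;> positivity

theorem sum_ite_ne_and_ne_max_zero_le {p : ι → ι → ℝ} (hp : ∀ j r, 0 ≤ p j r) :
    ∑ j, ∑ k, ∑ r, ∑ s,
        (if j ≠ k ∧ r ≠ s then max 0 (p j r - p j s) * max 0 (p k s - p k r) else 0)
      ≤ ∑ j, ∑ k, ∑ r, ∑ s, (if j ≠ k ∧ r ≠ s then p j r * p k s else 0) := by
  gcongr with j _ k _ r _ s _
  split_ifs
  · exact mul_le_mul (max_le (hp j r) (by linarith [hp j s]))
      (max_le (hp k s) (by linarith [hp k r])) (le_max_left _ _) (hp j r)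
  · rfl

end OffDiagonal

namespace Equiv.Perm

variable {α M : Type*} [Fintype α] [DecidableEq α] [AddCommMonoid M]

theorem card_smul_sum_apply (a : α) (f : α → M) :
    Fintype.card α • ∑ σ : Perm α, f (σ a) = (Fintype.card α).factorial • ∑ r, f r := by
  have hinv : ∀ b, ∑ σ : Perm α, f (σ b) = ∑ σ : Perm α, f (σ a) := fun b =>
    Fintype.sum_equiv (Equiv.mulRight (swap a b)) _ _ fun σ => by simp
  calc Fintype.card α • ∑ σ : Perm α, f (σ a) = ∑ b, ∑ σ : Perm α, f (σ b) := by
        simp only [hinv, Finset.sum_const, Finset.card_univ]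
    _ = ∑ σ : Perm α, ∑ b, f (σ b) := Finset.sum_comm
    _ = ∑ σ : Perm α, ∑ r, f r := Finset.sum_congr rfl fun σ _ => Equiv.sum_comp σ f
    _ = _ := by rw [Finset.sum_const, Finset.card_univ, Fintype.card_perm]

theorem card_mul_card_sub_one_smul_sum_apply_apply {a b : α} (hab : a ≠ b) (g : α → α → M) :
    (Fintype.card α * (Fintype.card α - 1)) • ∑ σ : Perm α, g (σ a) (σ b)
      = (Fintype.card α).factorial • ∑ r, ∑ s, if r ≠ s then g r s else 0 := by
  have hinv : ∀ j k, j ≠ k → ∑ σ : Perm α, g (σ j) (σ k) = ∑ σ : Perm α, g (σ a) (σ b) := by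
    intro j k hjk
    obtain ⟨τ, hτa, hτb⟩ :=
      MulAction.is_two_pretransitive_iff.mp (isMultiplyPretransitive α 2) hab hjk
    rw [Perm.smul_def] at hτa hτb
    exact Fintype.sum_equiv (Equiv.mulRight τ) _ _ fun σ => by simp [hτa, hτb]
  symm
  calc (Fintype.card α).factorial • ∑ r, ∑ s, (if r ≠ s then g r s else 0)
        = ∑ σ : Perm α, ∑ r, ∑ s, if r ≠ s then g r s else 0 := by
        rw [Finset.sum_const, Finset.card_univ, Fintype.card_perm]
    _ = ∑ σ : Perm α, ∑ j, ∑ k, if j ≠ k then g (σ j) (σ k) else 0 := by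
        refine Finset.sum_congr rfl fun σ _ => ?_
        rw [← Equiv.sum_comp σ]
        refine Finset.sum_congr rfl fun j _ => ?_
        rw [← Equiv.sum_comp σ]
        simp only [σ.injective.ne_iff]
    _ = ∑ j, ∑ k, if j ≠ k then ∑ σ : Perm α, g (σ j) (σ k) else 0 := by
        rw [Finset.sum_comm]
        refine Finset.sum_congr rfl fun j _ => ?_
        rw [Finset.sum_comm]
        simp only [Finset.sum_ite_irrel, Finset.sum_const_zero]
    _ = _ := by
        rw [← Finset.sum_sum_ite_ne_const]
        exact Fintype.sum_congr _ _ fun j => Fintype.sum_congr _ _ fun k => by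
          split_ifs with hjk <;> simp [hinv j k, hjk]

theorem factorial_inv_mul_sum_apply (a : α) (f : α → ℝ) :
    ((Fintype.card α).factorial : ℝ)⁻¹ * ∑ σ : Perm α, f (σ a)
      = (Fintype.card α : ℝ)⁻¹ * ∑ r, f r := by
  have h := card_smul_sum_apply a f
  have : Nonempty α := ⟨a⟩
  have hcard : (Fintype.card α : ℝ) ≠ 0 := Nat.cast_ne_zero.mpr Fintype.card_ne_zero
  have hfact : ((Fintype.card α).factorial : ℝ) ≠ 0 := Nat.cast_ne_zero.mpr (Nat.factorial_ne_zero _)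
  rw [nsmul_eq_mul, nsmul_eq_mul] at h
  field_simp
  linarith

theorem factorial_inv_mul_sum_apply_apply {a b : α} (hab : a ≠ b) (g : α → α → ℝ) :
    ((Fintype.card α).factorial : ℝ)⁻¹ * ∑ σ : Perm α, g (σ a) (σ b)
      = ((Fintype.card α : ℝ) * (Fintype.card α - 1))⁻¹ * ∑ r, ∑ s, if r ≠ s then g r s else 0 := by
  have h := card_mul_card_sub_one_smul_sum_apply_apply hab g
  have hcard : 1 < Fintype.card α := Fintype.one_lt_card_iff.mpr ⟨a, b, hab⟩
  have hcard' : (1:ℝ) < Fintype.card α := by exact_mod_cast hcard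
  have hfact : ((Fintype.card α).factorial : ℝ) ≠ 0 := Nat.cast_ne_zero.mpr (Nat.factorial_ne_zero _)
  rw [nsmul_eq_mul, nsmul_eq_mul] at h
  push_cast [Nat.cast_sub hcard.le] at h
  have hsub : (Fintype.card α : ℝ) - 1 ≠ 0 := by linarith
  have hcard0 : (Fintype.card α : ℝ) ≠ 0 := by linarith
  field_simp
  linarith

end Equiv.Perm

section DiagonalSum

variable (n : ℕ) (p : Fin n → Fin n → ℝ)

theorem sum_bw_mul_prod (f : Fin n → Fin n → Bool → ℝ) :
    ∑ x, bw n p x * ∏ j, ∏ r, f j r (x j r)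
      = ∏ j, ∏ r, (p j r * f j r true + (1 - p j r) * f j r false) := by
  simp only [bw, ← Finset.prod_mul_distrib]
  symm
  calc ∏ j, ∏ r, (p j r * f j r true + (1 - p j r) * f j r false)
      = ∏ j, ∏ r, ∑ b, (if b then p j r else 1 - p j r) * f j r b := by simp
    _ = _ := by simp only [Fintype.prod_sum]

theorem sum_bw_mul_prod_ind (S : Finset (Fin n × Fin n)) :
    ∑ x, bw n p x * ∏ q ∈ S, (if x q.1 q.2 then (1:ℝ) else 0) = ∏ q ∈ S, p q.1 q.2 := by
  have hprod : ∀ g : Fin n × Fin n → ℝ,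
      ∏ q ∈ S, g q = ∏ j, ∏ r, if (j, r) ∈ S then g (j, r) else 1 := fun g => by
    rw [← Fintype.prod_prod_type (fun q => if q ∈ S then g q else 1), Finset.prod_ite_mem,
      Finset.univ_inter]
  simp only [hprod]
  refine (sum_bw_mul_prod n p fun j r b => if (j, r) ∈ S then (if b then 1 else 0) else 1).trans ?_
  refine Finset.prod_congr rfl fun j _ => Finset.prod_congr rfl fun r _ => ?_
  by_cases h : (j, r) ∈ S <;> simp [h]

variable {n}

theorem sum_bw_mul_dSum (σ : Equiv.Perm (Fin n)) :
    ∑ x, bw n p x * dSum n x σ = ∑ j, p j (σ j) := by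
  simp only [dSum, Finset.mul_sum]
  rw [Finset.sum_comm]
  refine Finset.sum_congr rfl fun j _ => ?_
  simpa using sum_bw_mul_prod_ind n p {(j, σ j)}

theorem sum_bw_mul_dSum_sq (σ : Equiv.Perm (Fin n)) :
    ∑ x, bw n p x * dSum n x σ ^ 2
      = ∑ j, ∑ k, if j = k then p j (σ j) else p j (σ j) * p k (σ k) := by
  simp only [dSum, sq, Finset.sum_mul_sum]
  simp only [Finset.mul_sum]
  rw [Finset.sum_comm]
  refine Finset.sum_congr rfl fun j _ => ?_
  rw [Finset.sum_comm]
  refine Finset.sum_congr rfl fun k _ => ?_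
  split_ifs with hjk
  · subst hjk
    simpa [← ite_and] using sum_bw_mul_prod_ind n p {(j, σ j)}
  · have hne : (j, σ j) ≠ (k, σ k) := fun h => hjk (congrArg Prod.fst h)
    simpa [Finset.prod_pair hne, ← ite_and] using sum_bw_mul_prod_ind n p {(j, σ j), (k, σ k)}

theorem dExp_dSum : dExp n p (dSum n) = (n : ℝ)⁻¹ * ∑ j, ∑ r, p j r := by
  rw [dExp]
  simp only [sum_bw_mul_dSum]
  rw [Finset.sum_comm, Finset.mul_sum, Finset.mul_sum]
  refine Finset.sum_congr rfl fun j _ => ?_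
  simpa using Equiv.Perm.factorial_inv_mul_sum_apply j (p j)

theorem dExp_dSum_sq :
    dExp n p (fun x σ => dSum n x σ ^ 2)
      = (n : ℝ)⁻¹ * ∑ j, ∑ r, p j r
        + ((n : ℝ) * (n - 1))⁻¹ * ∑ j, ∑ k, ∑ r, ∑ s,
          (if j ≠ k ∧ r ≠ s then p j r * p k s else 0) := by
  rw [dExp]
  simp only [sum_bw_mul_dSum_sq]
  calc ((n.factorial : ℝ))⁻¹ * ∑ σ : Equiv.Perm (Fin n), ∑ j, ∑ k,
        (if j = k then p j (σ j) else p j (σ j) * p k (σ k))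
      = ∑ j, ∑ k, if j = k then ((n.factorial : ℝ))⁻¹ * ∑ σ : Equiv.Perm (Fin n), p j (σ j)
          else ((n.factorial : ℝ))⁻¹ * ∑ σ : Equiv.Perm (Fin n), p j (σ j) * p k (σ k) := by
        rw [Finset.sum_comm, Finset.mul_sum]
        refine Finset.sum_congr rfl fun j _ => ?_
        rw [Finset.sum_comm, Finset.mul_sum]
        refine Finset.sum_congr rfl fun k _ => ?_
        rw [Finset.sum_ite_irrel, mul_ite]
    _ = ∑ j, ∑ k, if j = k then (n : ℝ)⁻¹ * ∑ r, p j r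
          else ((n : ℝ) * (n - 1))⁻¹ * ∑ r, ∑ s, if r ≠ s then p j r * p k s else 0 := by
        refine Finset.sum_congr rfl fun j _ => Finset.sum_congr rfl fun k _ => ?_
        split_ifs with hjk
        · simpa using Equiv.Perm.factorial_inv_mul_sum_apply j (p j)
        · simpa using Equiv.Perm.factorial_inv_mul_sum_apply_apply hjk fun r s => p j r * p k s
    _ = _ := by
        rw [Finset.sum_sum_ite_eq_add, sum_ite_ne_and_ne_eq]
        congr 1
        · rw [Finset.mul_sum]
        · simp only [Finset.mul_sum, mul_ite, mul_zero]

theorem sub_dVar_eq :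
    (n : ℝ)⁻¹ * ∑ j, ∑ r, p j r - dVar n p
      = ((n : ℝ)⁻¹ * ∑ j, ∑ r, p j r) ^ 2 - ((n : ℝ) * (n - 1))⁻¹ * ∑ j, ∑ k, ∑ r, ∑ s,
          (if j ≠ k ∧ r ≠ s then p j r * p k s else 0) := by
  rw [dVar, dExp_dSum, dExp_dSum_sq]
  ring

end DiagonalSum

theorem lemma_A_le_B_le_of_bounds {N lam T G V γ : ℝ} (hN : 2 ≤ N) (hG : 0 ≤ G) (hGT : G ≤ T)
    (hT : N ^ 2 * T ≤ (N - 1) ^ 2 * (N * lam) ^ 2 + N * G)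
    (hV : V = lam ^ 2 - (N * (N - 1))⁻¹ * T) (hγ : γ = 2 / (N ^ 2 * (N - 1)) * G) :
    V + γ ≤ (N - 2) / N * V + 2 * lam ^ 2 / N ∧
      (N - 2) / N * V + 2 * lam ^ 2 / N ≤ (3 - 2 / N) * (V + γ) := by
  have hN0 : N ≠ 0 := by linarith
  have hN1 : N - 1 ≠ 0 := by linarith
  subst hV hγ
  constructor
  · rw [← sub_nonneg]
    have hdiff : (N - 2) / N * (lam ^ 2 - (N * (N - 1))⁻¹ * T) + 2 * lam ^ 2 / N
        - (lam ^ 2 - (N * (N - 1))⁻¹ * T + 2 / (N ^ 2 * (N - 1)) * G)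
        = 2 * (T - G) / (N ^ 2 * (N - 1)) := by
      field_simp
      ring
    rw [hdiff]
    exact div_nonneg (by linarith) (mul_nonneg (by positivity) (by linarith))
  · rw [← sub_nonneg]
    have hdiff : (3 - 2 / N) * (lam ^ 2 - (N * (N - 1))⁻¹ * T + 2 / (N ^ 2 * (N - 1)) * G)
        - ((N - 2) / N * (lam ^ 2 - (N * (N - 1))⁻¹ * T) + 2 * lam ^ 2 / N)
        = 2 * ((N - 1) ^ 2 * (N * lam) ^ 2 + (3 * N - 2) * G - N ^ 2 * T) / (N ^ 3 * (N - 1)) := by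
      field_simp
      ring
    rw [hdiff]
    exact div_nonneg (by nlinarith) (mul_nonneg (by positivity) (by linarith))

theorem lemma_A_le_B_le_general (n : ℕ) (hn : 2 ≤ n) (p : Fin n → Fin n → ℝ)
    (hp : ∀ j r, p j r ∈ Set.Icc (0:ℝ) 1)
    (lam : ℝ) (hlam_def : lam = (n:ℝ)⁻¹ * ∑ j : Fin n, ∑ r : Fin n, p j r)
    (gamma' : ℝ)
    (hgamma' : gamma' = (2 / ((n:ℝ)^2 * ((n:ℝ) - 1))) *
        ∑ j : Fin n, ∑ k : Fin n, ∑ r : Fin n, ∑ s : Fin n,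
          (if j ≠ k ∧ r ≠ s then max 0 (p j r - p j s) * max 0 (p k s - p k r) else 0)) :
    lam - dVar n p + gamma'
      ≤ (((n:ℝ) - 2) / n) * (lam - dVar n p) + 2 * lam^2 / n ∧
    (((n:ℝ) - 2) / n) * (lam - dVar n p) + 2 * lam^2 / n
      ≤ (3 - 2 / (n:ℝ)) * (lam - dVar n p + gamma') := by
  have hN : (2:ℝ) ≤ n := by exact_mod_cast hn
  have hS : ∑ j, ∑ r, p j r = n * lam := by
    rw [hlam_def, mul_inv_cancel_left₀ (by positivity)]
  have hbound := sq_card_mul_sum_ite_ne_and_ne_le p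
  rw [Fintype.card_fin, hS] at hbound
  have hvar := sub_dVar_eq p
  rw [← hlam_def] at hvar
  exact lemma_A_le_B_le_of_bounds hN (sum_ite_ne_and_ne_max_zero_nonneg p)
    (sum_ite_ne_and_ne_max_zero_le fun j r => (hp j r).1) hbound hvar hgamma'

theorem lemma_A_le_B_le (n : ℕ) (hn : 2 ≤ n) (p : Fin n → Fin n → ℝ)
    (hp : ∀ j r, p j r ∈ Set.Icc (0:ℝ) 1)
    (lam : ℝ) (hlam_def : lam = (n:ℝ)⁻¹ * ∑ j : Fin n, ∑ r : Fin n, p j r)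
    (hlam_pos : 0 < lam)
    (gamma' : ℝ)
    (hgamma' : gamma' = (2 / ((n:ℝ)^2 * ((n:ℝ) - 1))) *
        ∑ j : Fin n, ∑ k : Fin n, ∑ r : Fin n, ∑ s : Fin n,
          (if j ≠ k ∧ r ≠ s then max 0 (p j r - p j s) * max 0 (p k s - p k r) else 0)) :
    lam - dVar n p + gamma'
      ≤ (((n:ℝ) - 2) / n) * (lam - dVar n p) + 2 * lam^2 / n ∧
    (((n:ℝ) - 2) / n) * (lam - dVar n p) + 2 * lam^2 / n
      ≤ (3 - 2 / (n:ℝ)) * (lam - dVar n p + gamma') :=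
  lemma_A_le_B_le_general n hn p hp lam hlam_def gamma' hgamma'
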